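/- arXiv:2411.14238 — 4 statements merged into one kernel-verified Lean document; each statement's English description precedes it below -/
import Mathlib

section
/- Let G be a finite simple graph on n vertices with adjacency matrix A(G) and permanental polynomial π(G,x) = per(xI − A(G)). Suppose there exists an orientation G^e of G, i.e., a real n×n skew-symmetric matrix A(G^e) with entries in {0, 1, −1} satisfying |A(G^e)_{uv}| = A(G)_{uv} for all u, v, such that π(G,x) = det(xI − A(G^e)). Then G is bipartite. -/
open Polynomial SimpleGraph
open scoped Classical

noncomputable section

/-- The adjacency matrix of a simple graph `G`, with entries in `R`. -/
def adjMat (R : Type*) [Zero R] [One R] {V : Type*} [Fintype V] (G : SimpleGraph V) :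
    Matrix V V R := fun u v => if G.Adj u v then 1 else 0

/-- The characteristic polynomial `det (xI - A(G))` of a simple graph `G`. -/
def charPolyG (R : Type*) [CommRing R] {V : Type*} [Fintype V] (G : SimpleGraph V) : R[X] :=
  (adjMat R G).charpoly

/-- The permanental polynomial `per (xI - A(G))` of a simple graph `G`. -/
def permPolyG (R : Type*) [CommRing R] {V : Type*} [Fintype V] (G : SimpleGraph V) : R[X] :=
  (Matrix.charmatrix (adjMat R G)).permanent

/-- The modified characteristic polynomial `φ_p(G,x) = ∑_{i even} (-1)^{i/2} a_i x^{n-i}`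
of a (bipartite) graph `G` on `n` vertices, where `a_i` is the coefficient of `x^{n-i}`
in the characteristic polynomial. -/
def phiP {V : Type*} [Fintype V] (G : SimpleGraph V) : ℝ[X] :=
  ∑ i ∈ Finset.range (Fintype.card V + 1),
    if Even i then
      C ((-1 : ℝ) ^ (i / 2) * (charPolyG ℝ G).coeff (Fintype.card V - i)) *
        X ^ (Fintype.card V - i)
    else 0

/-- `G` contains no cycle whose length is divisible by 4. -/
def C4kFree {V : Type*} (G : SimpleGraph V) : Prop :=
  ¬ ∃ (v : V) (c : G.Walk v v), c.IsCycle ∧ 4 ∣ c.length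

/-- `G` is `4k`-intercyclic: it contains no two vertex-disjoint cycles,
each of length divisible by 4. -/
def Intercyclic4k {V : Type*} (G : SimpleGraph V) : Prop :=
  ¬ ∃ (u v : V) (c : G.Walk u u) (d : G.Walk v v),
      c.IsCycle ∧ d.IsCycle ∧ 4 ∣ c.length ∧ 4 ∣ d.length ∧
      ∀ x, x ∈ c.support → x ∉ d.support

/-- A subgraph `R` of `G` is a cycle of `G` if it is the subgraph traced by some cycle walk. -/
def IsCycleSubgraph {V : Type*} (G : SimpleGraph V) (R : G.Subgraph) : Prop :=
  ∃ (v : V) (c : G.Walk v v), c.IsCycle ∧ R = c.toSubgraph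

/-- The set of all `4k`-cycles (cycles of length divisible by 4) of `G`,
viewed as subgraphs. -/
def cycles4k {V : Type*} (G : SimpleGraph V) : Set G.Subgraph :=
  {R | ∃ (v : V) (c : G.Walk v v), c.IsCycle ∧ 4 ∣ c.length ∧ R = c.toSubgraph}

/-- The connected component `c` of the subgraph `H` is a single edge (a `K₂`). -/
def IsEdgeComp {V : Type*} {G : SimpleGraph V} (H : G.Subgraph)
    (c : H.coe.ConnectedComponent) : Prop :=
  ∃ x y : H.verts, H.coe.Adj x y ∧ c.supp = {x, y}

/-- The connected component `c` of the subgraph `H` is a cycle: there is a cycle walk whose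
support is exactly `c` and which uses every edge of `H` inside `c`. -/
def IsCycleComp {V : Type*} {G : SimpleGraph V} (H : G.Subgraph)
    (c : H.coe.ConnectedComponent) : Prop :=
  ∃ (v : H.verts) (w : H.coe.Walk v v), w.IsCycle ∧
    {x | x ∈ w.support} = c.supp ∧
    ∀ x y : H.verts, H.coe.Adj x y → x ∈ c.supp → w.toSubgraph.Adj x y

/-- A Sachs subgraph of `G`: a subgraph each of whose connected components is either
a single edge or a cycle. -/
def IsSachs {V : Type*} {G : SimpleGraph V} (H : G.Subgraph) : Prop :=
  ∀ c : H.coe.ConnectedComponent, IsEdgeComp H c ∨ IsCycleComp H c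

/-- The number of connected components of the subgraph `H`. -/
def pCount {V : Type*} {G : SimpleGraph V} (H : G.Subgraph) : ℕ :=
  Nat.card H.coe.ConnectedComponent

/-- The number of components of `H` that are cycles of length divisible by 4. -/
def sCount {V : Type*} {G : SimpleGraph V} (H : G.Subgraph) : ℕ :=
  Set.ncard {c : H.coe.ConnectedComponent | IsCycleComp H c ∧ c.supp.ncard % 4 = 0}

/-- The number of components of `H` that are cycles of length congruent to 2 mod 4. -/
def tCount {V : Type*} {G : SimpleGraph V} (H : G.Subgraph) : ℕ :=
  Set.ncard {c : H.coe.ConnectedComponent | IsCycleComp H c ∧ c.supp.ncard % 4 = 2}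

/-- The number of components of `H` that are cycles. -/
def cycCount {V : Type*} {G : SimpleGraph V} (H : G.Subgraph) : ℕ :=
  Set.ncard {c : H.coe.ConnectedComponent | IsCycleComp H c}

/-- `R` is a union of connected components of `H`. -/
def IsComponentUnion {V : Type*} {G : SimpleGraph V} (R H : G.Subgraph) : Prop :=
  R ≤ H ∧ ∀ x y, H.Adj x y → x ∈ R.verts → R.Adj x y

/-! A skew-symmetric `B` satisfies `(-B).charpoly = Bᵀ.charpoly = B.charpoly`, so
`det (xI - B)` has no monomial `x ^ (n - k)` with `k` odd. In `per (xI - A(G))` the coefficient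
of `x ^ (n - k)` is `(-1) ^ k` times the number of permutations moving exactly `k` vertices, each
to a neighbour, so no cancellation can occur. If `G` is not bipartite, a shortest odd closed walk
repeats no vertex, and shifting each of its vertices to the next one is such a permutation with
`k` odd. -/

open Finset

namespace Matrix

variable {n R : Type*} [Fintype n] [DecidableEq n] [CommRing R]

theorem charpoly_neg (M : Matrix n n R) :
    (-M).charpoly = (-1) ^ Fintype.card n * M.charpoly.comp (-X) := by
  have hmap : (compRingHom (-X)).mapMatrix M.charmatrix = -(-M).charmatrix := by
    ext i j
    by_cases hij : i = j
    · subst hij; simp [charmatrix_apply_eq]; ring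
    · simp [charmatrix_apply_ne _ _ _ hij]
  have hcomp : M.charpoly.comp (-X) = (-1) ^ Fintype.card n * (-M).charpoly := by
    rw [charpoly, ← coe_compRingHom_apply, RingHom.map_det, hmap, det_neg, charpoly]
  rw [hcomp, ← mul_assoc, ← mul_pow, neg_one_mul, neg_neg, one_pow, one_mul]

theorem charpoly_coeff_eq_zero_of_transpose_eq_neg [NoZeroDivisors R] [CharZero R]
    {M : Matrix n n R} (hM : Mᵀ = -M) {d : ℕ} (hd : Odd (Fintype.card n - d)) :
    M.charpoly.coeff d = 0 := by
  have hsymm : M.charpoly = (-1) ^ Fintype.card n * M.charpoly.comp (C (-1) * X) := by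
    rw [C_neg, C_1, neg_one_mul, ← charpoly_neg, ← hM, charpoly_transpose]
  have hsign : ((-1 : R) ^ Fintype.card n * (-1) ^ d) = -1 := by
    obtain ⟨m, hm⟩ := hd
    rw [← pow_add, show Fintype.card n + d = 2 * (d + m) + 1 by omega, pow_succ, pow_mul]
    simp
  have := congrArg (coeff · d) hsymm
  simp only [← C_neg, ← C_1, ← C_pow, coeff_C_mul, comp_C_mul_X_coeff] at this
  rw [mul_left_comm, hsign, mul_neg_one] at this
  exact CharZero.eq_neg_self_iff.mp this

theorem prod_charmatrix_apply_perm (M : Matrix n n R) (hM : ∀ i, M i i = 0) (σ : Equiv.Perm n) :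
    ∏ i, M.charmatrix (σ i) i =
      C ((-1) ^ #σ.support * ∏ i ∈ σ.support, M (σ i) i) * X ^ (Fintype.card n - #σ.support) := by
  have hmoved : ∏ i ∈ σ.support, M.charmatrix (σ i) i = ∏ i ∈ σ.support, -C (M (σ i) i) :=
    prod_congr rfl fun i hi => charmatrix_apply_ne _ _ _ (Equiv.Perm.mem_support.mp hi)
  have hfixed : ∏ i ∈ σ.supportᶜ, M.charmatrix (σ i) i = ∏ _i ∈ σ.supportᶜ, (X : R[X]) :=
    prod_congr rfl fun i hi => by
      rw [Equiv.Perm.notMem_support.mp (mem_compl.mp hi), charmatrix_apply_eq, hM, map_zero,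
        sub_zero]
  rw [← prod_mul_prod_compl σ.support, hmoved, hfixed, prod_const, card_compl, prod_neg,
    map_mul, map_pow, map_neg, map_one, map_prod]

theorem coeff_permanent_charmatrix (M : Matrix n n R) (hM : ∀ i, M i i = 0) {k : ℕ}
    (hk : k ≤ Fintype.card n) :
    M.charmatrix.permanent.coeff (Fintype.card n - k) =
      (-1) ^ k * ∑ σ : Equiv.Perm n with #σ.support = k, ∏ i ∈ σ.support, M (σ i) i := by
  rw [permanent, finsetSum_coeff, sum_filter, mul_sum]
  refine sum_congr rfl fun σ _ => ?_
  rw [prod_charmatrix_apply_perm M hM, coeff_C_mul_X_pow]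
  have hσ : #σ.support ≤ Fintype.card n := card_le_univ _
  by_cases hσk : #σ.support = k
  · simp [hσk]
  · rw [if_neg (by omega), if_neg hσk, mul_zero]

end Matrix

theorem adjMat_apply_self {R V : Type*} [Zero R] [One R] [Fintype V] (G : SimpleGraph V) (v : V) :
    adjMat R G v v = 0 := by
  simp [adjMat]

theorem permPolyG_coeff_ne_zero {R V : Type*} [CommRing R] [PartialOrder R] [IsStrictOrderedRing R]
    [Fintype V] (G : SimpleGraph V) (σ : Equiv.Perm V) (hσ : ∀ v ∈ σ.support, G.Adj v (σ v)) :
    (permPolyG R G).coeff (Fintype.card V - #σ.support) ≠ 0 := by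
  rw [permPolyG, Matrix.coeff_permanent_charmatrix _ (adjMat_apply_self G) (card_le_univ _)]
  refine (isUnit_neg_one.pow _).mul_right_eq_zero.not.mpr (ne_of_gt ?_)
  have hnonneg : ∀ τ : Equiv.Perm V, 0 ≤ ∏ v ∈ τ.support, adjMat R G (τ v) v := fun τ =>
    prod_nonneg fun v _ => by unfold adjMat; split_ifs <;> simp
  have hσ_one : ∏ v ∈ σ.support, adjMat R G (σ v) v = 1 :=
    prod_eq_one fun v hv => if_pos (hσ v hv).symm
  calc (0 : R) < 1 := one_pos
    _ = ∏ v ∈ σ.support, adjMat R G (σ v) v := hσ_one.symm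
    _ ≤ ∑ τ : Equiv.Perm V with #τ.support = #σ.support, ∏ v ∈ τ.support, adjMat R G (τ v) v :=
      single_le_sum (fun τ _ => hnonneg τ) (mem_filter.mpr ⟨mem_univ σ, rfl⟩)

namespace SimpleGraph

variable {V : Type*} {G : SimpleGraph V}

theorem colorable_two_of_forall_even_length (h : ∀ (x : V) (p : G.Walk x x), Even p.length) :
    G.Colorable 2 := by
  have hparity : ∀ {a b : V} (p q : G.Walk a b), Even p.length ↔ Even q.length := fun p q => by
    simpa [Nat.even_add] using h _ (p.append q.reverse)
  -- colour `v` by the parity of some walk from `v` to a fixed vertex of its component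
  let root : V → V := fun v => (G.connectedComponentMk v).out
  have hroot : ∀ v, G.Reachable v (root v) := fun v =>
    ConnectedComponent.exact (G.connectedComponentMk v).out_eq.symm
  refine (Coloring.mk (fun v => decide (Even (hroot v).some.length))
    fun {a b} hab => ?_).colorable.mono (by simp)
  have hroot_eq : root b = root a := by
    simp only [root, ConnectedComponent.connectedComponentMk_eq_of_adj hab]
  have := hparity (hroot a).some (((hroot b).some.cons hab).copy rfl hroot_eq)
  rw [Walk.length_copy, Walk.length_cons, Nat.even_add_one] at this
  simp only [ne_eq, decide_eq_decide, this, not_iff_self, not_false_eq_true]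

namespace Walk

theorem exists_loop_and_shortcut_of_getVert_eq {u v : V} (p : G.Walk u v) {i j : ℕ} (hij : i ≤ j)
    (hj : j ≤ p.length) (h : p.getVert i = p.getVert j) :
    ∃ (c : G.Walk (p.getVert i) (p.getVert i)) (q : G.Walk u v),
      c.length = j - i ∧ q.length = p.length - (j - i) :=
  ⟨((p.drop i).take (j - i)).copy rfl (by rw [drop_getVert, Nat.add_sub_cancel' hij, h]),
    (p.take i).append ((p.drop j).copy h.symm rfl), by simp; omega, by simp; omega⟩

theorem exists_odd_length_support_tail_nodup {x : V} (p : G.Walk x x) (hp : Odd p.length) :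
    ∃ (y : V) (q : G.Walk y y), Odd q.length ∧ q.support.tail.Nodup := by
  induction hn : p.length using Nat.strong_induction_on generalizing x with
  | _ n ih =>
  by_cases hnd : p.support.tail.Nodup
  · exact ⟨x, p, hp, hnd⟩
  obtain ⟨i, j, hij, hj, hdup⟩ :
      ∃ i j, i < j ∧ j < p.length ∧ p.getVert (i + 1) = p.getVert (j + 1) := by
    simp only [List.nodup_iff_getElem?_ne_getElem?, not_forall, not_not] at hnd
    obtain ⟨i, j, hij, hj, h⟩ := hnd
    have hlen : p.support.tail.length = p.length := by simp
    refine ⟨i, j, hij, by omega, ?_⟩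
    rw [List.getElem?_eq_getElem (by omega), List.getElem?_eq_getElem hj, Option.some_inj,
      List.getElem_tail, List.getElem_tail] at h
    rwa [getVert_eq_support_getElem _ (by omega), getVert_eq_support_getElem _ (by omega)]
  obtain ⟨c, q, hc, hq⟩ :=
    p.exists_loop_and_shortcut_of_getVert_eq (by omega : i + 1 ≤ j + 1) (by omega) hdup
  rcases Nat.even_or_odd (j - i) with heven | hodd
  · refine ih _ (by omega) q ?_ rfl
    rw [hq, Nat.add_sub_add_right]
    exact Nat.Odd.sub_even (by omega) hp heven
  · exact ih _ (by omega) c (by rwa [hc, Nat.add_sub_add_right]) rfl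

theorem adj_formPerm_support_tail [DecidableEq V] {x : V} (p : G.Walk x x)
    (hp : p.support.tail.Nodup) {v : V} (hv : v ∈ p.support.tail) :
    G.Adj v (p.support.tail.formPerm v) := by
  obtain ⟨i, hi, rfl⟩ := List.getElem_of_mem hv
  have hlen : p.support.tail.length = p.length := by simp
  have hmod := Nat.mod_lt (i + 1) (show 0 < p.support.tail.length by omega)
  rw [List.formPerm_apply_getElem _ hp, List.getElem_tail, List.getElem_tail,
    ← getVert_eq_support_getElem _ (by omega), ← getVert_eq_support_getElem _ (by omega)]
  rcases Nat.lt_or_ge (i + 1) p.support.tail.length with hlt | hge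
  · rw [Nat.mod_eq_of_lt hlt]
    exact p.adj_getVert_succ (by omega)
  · -- the last vertex of the closed walk is also its first
    have hlast : i + 1 = p.length := by omega
    rw [hlast, hlen, Nat.mod_self, getVert_length]
    simpa using p.adj_getVert_succ (i := 0) (by omega)

end Walk

theorem exists_perm_odd_card_support_of_not_colorable_two [Fintype V] [DecidableEq V]
    (h : ¬G.Colorable 2) :
    ∃ σ : Equiv.Perm V, Odd #σ.support ∧ ∀ v ∈ σ.support, G.Adj v (σ v) := by
  obtain ⟨x, p, hp⟩ : ∃ (x : V) (p : G.Walk x x), ¬Even p.length := by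
    by_contra! hall
    exact h (colorable_two_of_forall_even_length hall)
  obtain ⟨y, q, hq, hnd⟩ := p.exists_odd_length_support_tail_nodup (Nat.not_even_iff_odd.mp hp)
  have hlen : q.support.tail.length = q.length := by simp
  have hne_one : q.length ≠ 1 := fun h1 => by
    have hend : q.getVert 1 = y := h1 ▸ q.getVert_length
    simpa [hend] using q.adj_getVert_succ (i := 0) (by omega)
  have hsupp : q.support.tail.formPerm.support = q.support.tail.toFinset :=
    List.support_formPerm_of_nodup _ hnd fun z hz => hne_one (by simpa [hz] using hlen.symm)
  refine ⟨q.support.tail.formPerm, ?_, fun v hv => ?_⟩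
  · rwa [hsupp, List.toFinset_card_of_nodup hnd, hlen]
  · rw [hsupp, List.mem_toFinset] at hv
    exact q.adj_formPerm_support_tail hnd hv

end SimpleGraph

theorem stmt_2_general {V : Type*} [Fintype V] (G : SimpleGraph V) (B : Matrix V V ℝ)
    (hskew : B.transpose = -B)
    (hperm : permPolyG ℝ G = B.charpoly) :
    G.Colorable 2 := by
  by_contra hcol
  obtain ⟨σ, hodd, hadj⟩ := G.exists_perm_odd_card_support_of_not_colorable_two hcol
  apply permPolyG_coeff_ne_zero (R := ℝ) G σ hadj
  rw [hperm]
  exact Matrix.charpoly_coeff_eq_zero_of_transpose_eq_neg hskew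
    (by rwa [Nat.sub_sub_self (card_le_univ _)])

/-- If some orientation `G^e` of `G` (given by a real skew-symmetric matrix `B`
with entries in `{0, 1, -1}` whose absolute values reproduce the adjacency matrix of `G`)
satisfies `π(G,x) = det (xI - A(G^e))`, then `G` is bipartite. -/
theorem stmt_2 {V : Type*} [Fintype V] (G : SimpleGraph V) (B : Matrix V V ℝ)
    (hskew : B.transpose = -B)
    (hentries : ∀ u v, B u v = 0 ∨ B u v = 1 ∨ B u v = -1)
    (habs : ∀ u v, |B u v| = adjMat ℝ G u v)
    (hperm : permPolyG ℝ G = B.charpoly) :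
    G.Colorable 2 :=
  stmt_2_general G B hskew hperm

end
end

section
/- Let G be a finite simple bipartite graph that is 4k-intercyclic (contains no two vertex-disjoint cycles each of length divisible by 4), let R be a cycle of G of length divisible by 4, and let i be an even integer with i ≥ |V(R)|. Then the map U ↦ U∖R (deleting the vertices of R and all incident edges) is a bijection from the set of Sachs subgraphs of G on i vertices that contain R as a union of components onto the set of Sachs subgraphs of G∖R on i − |V(R)| vertices; moreover, for every such U, the number of cycle components of U∖R equals the number of components of U that are cycles of length congruent to 2 mod 4. -/
open Polynomial SimpleGraph
open scoped Classical

noncomputable section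

/-!
Deleting a union of components `R` of `H` leaves a subgraph `W` disjoint from `R` with
`H = W ⊔ R`; conversely, `R` is a union of components of `W ⊔ R` whenever `W` avoids `R`.
For vertex-disjoint `W` and `R`, the components of `W ⊔ R` are those of `W` together with
those of `R`, with the same vertices and edges, so `W ⊔ R` is Sachs iff both `W` and `R` are.
A cycle component of `W` is a cycle of `G` disjoint from the `4k`-cycle `R`: it has even length
since `G` is bipartite, and its length is not divisible by 4 since `G` is `4k`-intercyclic.
Hence it has length `2 mod 4`, while the only component of `R` has length `0 mod 4`.
-/

namespace SimpleGraph

variable {V : Type*} {G : SimpleGraph V}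

theorem Walk.IsCycle.ncard_support {u : V} {p : G.Walk u u} (hp : p.IsCycle) :
    {x | x ∈ p.support}.ncard = p.length := by
  have hsupp : {x | x ∈ p.support} = (p.support.tail.toFinset : Set V) := by
    ext x
    simp only [Set.mem_ofPred_eq, List.coe_toFinset]
    refine ⟨fun hx => ?_, List.mem_of_mem_tail⟩
    rw [← p.cons_tail_support, List.mem_cons] at hx
    rcases hx with rfl | hx
    · exact Walk.end_mem_tail_support hp.not_nil
    · exact hx
  rw [hsupp, Set.ncard_coe_finset, List.toFinset_card_of_nodup hp.support_nodup,
    List.length_tail, Walk.length_support, Nat.add_sub_cancel]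

namespace Subgraph

theorem toSubgraph_map_hom_adj {H : G.Subgraph} {a b : H.verts} (w : H.coe.Walk a b)
    (x y : H.verts) : (w.map H.hom).toSubgraph.Adj x y ↔ w.toSubgraph.Adj x y := by
  rw [Walk.toSubgraph_map, Subgraph.map_adj]
  exact Relation.map_apply_apply hom_injective hom_injective _ _ _

theorem verts_toSubgraph_map_hom {H : G.Subgraph} {a b : H.verts} (w : H.coe.Walk a b) :
    (w.map H.hom).toSubgraph.verts = Subtype.val '' {x | x ∈ w.support} := by
  simp only [Walk.verts_toSubgraph, Walk.support_map]
  ext; simp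

theorem disjoint_deleteVerts_verts {H R : G.Subgraph} :
    Disjoint (H.deleteVerts R.verts).verts R.verts :=
  Set.disjoint_sdiff_left

theorem sup_deleteVerts_of_disjoint {R W : G.Subgraph} (hd : Disjoint W.verts R.verts) :
    (W ⊔ R).deleteVerts R.verts = W := by
  ext x y
  · simp [Set.union_sdiff_cancel_right hd.inter_eq.le]
  · simp only [deleteVerts_adj, Subgraph.sup_adj]
    constructor
    · rintro ⟨-, hx, -, -, h | h⟩
      · exact h
      · exact absurd h.fst_mem hx
    · intro h
      exact ⟨Or.inl h.fst_mem, Set.disjoint_left.1 hd h.fst_mem, Or.inl h.snd_mem,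
        Set.disjoint_left.1 hd h.snd_mem, Or.inl h⟩

end Subgraph

end SimpleGraph

section SachsSubgraphs

open Subgraph

variable {V : Type*} {G : SimpleGraph V}

theorem isEdgeComp_iff {H : G.Subgraph} (k : H.coe.ConnectedComponent) :
    IsEdgeComp H k ↔ ∃ x y, H.Adj x y ∧ Subtype.val '' k.supp = {x, y} := by
  constructor
  · rintro ⟨x, y, hxy, hk⟩
    exact ⟨x, y, hxy, by rw [hk, Set.image_pair]⟩
  · rintro ⟨x, y, hxy, hk⟩
    refine ⟨⟨x, hxy.fst_mem⟩, ⟨y, hxy.snd_mem⟩, hxy, ?_⟩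
    exact Subtype.val_injective.image_injective (by rw [hk, Set.image_pair])

-- Phrased through a cycle of `G`, this depends on `H` only via `H.induce`, which lets cycle
-- components pass between a union of components and the ambient subgraph.
theorem isCycleComp_iff {H : G.Subgraph} (k : H.coe.ConnectedComponent) :
    IsCycleComp H k ↔ ∃ (u : V) (p : G.Walk u u),
      p.IsCycle ∧ p.toSubgraph = H.induce (Subtype.val '' k.supp) := by
  have hS : Subtype.val '' k.supp ⊆ H.verts := by
    rintro _ ⟨x, -, rfl⟩
    exact x.2
  have mem_of_adj : ∀ {x y : H.verts}, H.coe.Adj x y → x ∈ k.supp → y ∈ k.supp :=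
    fun hxy hx => (ConnectedComponent.mem_supp_congr_adj k hxy).1 hx
  constructor
  · rintro ⟨v, w, hw, hsupp, hedges⟩
    refine ⟨H.hom v, w.map H.hom, hw.map hom_injective, Subgraph.ext ?_ ?_⟩
    · exact (verts_toSubgraph_map_hom w).trans (by rw [hsupp, induce_verts])
    · funext x y
      refine propext ⟨fun hxy => ?_, ?_⟩
      · rw [Walk.toSubgraph_map, Subgraph.map_adj] at hxy
        obtain ⟨a, b, hab, rfl, rfl⟩ := hxy
        have hmem : ∀ z, z ∈ w.support → (z : V) ∈ Subtype.val '' k.supp :=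
          fun z hz => ⟨z, hsupp ▸ hz, rfl⟩
        exact ⟨hmem a (Walk.mem_support_of_adj_toSubgraph hab),
          hmem b (Walk.mem_support_of_adj_toSubgraph hab.symm), hab.adj_sub⟩
      · rintro ⟨⟨a, ha, rfl⟩, ⟨b, -, rfl⟩, hab⟩
        exact (toSubgraph_map_hom_adj w a b).2 (hedges a b hab ha)
  · rintro ⟨u, p, hp, hpH⟩
    have hle : p.toSubgraph ≤ H := hpH ▸ (induce_mono_right hS).trans_eq induce_self_verts
    have hverts : p.toSubgraph.verts = Subtype.val '' k.supp := by
      rw [hpH, induce_verts]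
    have hadj : ∀ x y, p.toSubgraph.Adj x y ↔ (H.induce (Subtype.val '' k.supp)).Adj x y := by
      rw [hpH]; exact fun _ _ => Iff.rfl
    set w := p.mapToSubgraph.map (inclusion hle)
    have hw : w.map H.hom = p := by
      rw [Walk.map_map]
      exact p.map_mapToSubgraph_hom
    have hw_cycle : w.IsCycle :=
      (Walk.isCycle_map_iff_of_injective hom_injective).1 (by rw [hw]; exact hp)
    refine ⟨_, w, hw_cycle, ?_, ?_⟩
    · apply Subtype.val_injective.image_injective
      rw [← verts_toSubgraph_map_hom, hw]
      exact hverts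
    · intro x y hxy hx
      rw [← toSubgraph_map_hom_adj, hw]
      exact (hadj _ _).2 ⟨⟨x, hx, rfl⟩, ⟨y, mem_of_adj hxy hx, rfl⟩, hxy⟩

namespace IsComponentUnion

variable {K H : G.Subgraph}

theorem adj_iff (hKH : IsComponentUnion K H) {x y : V} (hx : x ∈ K.verts) :
    H.Adj x y ↔ K.Adj x y :=
  ⟨fun h => hKH.2 x y h hx, fun h => hKH.1.2 h⟩

theorem exists_reachable (hKH : IsComponentUnion K H) {x y : H.verts}
    (hxy : H.coe.Reachable x y) (hx : (x : V) ∈ K.verts) :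
    ∃ hy : (y : V) ∈ K.verts, K.coe.Reachable ⟨x, hx⟩ ⟨y, hy⟩ := by
  obtain ⟨p⟩ := hxy
  induction p with
  | nil => exact ⟨hx, .refl _⟩
  | cons h p ih =>
    have hK : K.Adj _ _ := (hKH.adj_iff hx).1 h
    obtain ⟨hy, hr⟩ := ih hK.snd_mem
    exact ⟨hy, hK.coe.reachable.trans hr⟩

theorem mem_supp_map_iff (hKH : IsComponentUnion K H)
    (k : K.coe.ConnectedComponent) (x : H.verts) :
    x ∈ (k.map (inclusion hKH.1)).supp ↔ ∃ hx : (x : V) ∈ K.verts, ⟨(x : V), hx⟩ ∈ k.supp := by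
  induction k using ConnectedComponent.ind with | h a => ?_
  simp only [ConnectedComponent.map_mk, ConnectedComponent.mem_supp_iff, ConnectedComponent.eq]
  constructor
  · intro hxa
    obtain ⟨hx, hr⟩ := hKH.exists_reachable hxa.symm a.2
    exact ⟨hx, hr.symm⟩
  · rintro ⟨hx, hr⟩
    exact hr.map (inclusion hKH.1)

theorem image_supp_map (hKH : IsComponentUnion K H)
    (k : K.coe.ConnectedComponent) :
    Subtype.val '' (k.map (inclusion hKH.1)).supp = Subtype.val '' k.supp := by
  ext z
  constructor
  · rintro ⟨x, hx, rfl⟩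
    obtain ⟨_, hk⟩ := (hKH.mem_supp_map_iff k x).1 hx
    exact ⟨_, hk, rfl⟩
  · rintro ⟨y, hy, rfl⟩
    exact ⟨inclusion hKH.1 y, (hKH.mem_supp_map_iff k _).2 ⟨y.2, hy⟩, rfl⟩

theorem ncard_supp_map (hKH : IsComponentUnion K H)
    (k : K.coe.ConnectedComponent) : (k.map (inclusion hKH.1)).supp.ncard = k.supp.ncard := by
  rw [← Set.ncard_image_of_injective _ Subtype.val_injective, hKH.image_supp_map,
    Set.ncard_image_of_injective _ Subtype.val_injective]

theorem map_injective (hKH : IsComponentUnion K H) :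
    Function.Injective (ConnectedComponent.map (inclusion hKH.1)) := by
  intro k l hkl
  induction k using ConnectedComponent.ind with | h a => ?_
  induction l using ConnectedComponent.ind with | h b => ?_
  simp only [ConnectedComponent.map_mk, ConnectedComponent.eq] at hkl ⊢
  exact (hKH.exists_reachable hkl a.2).2

theorem induce_eq (hKH : IsComponentUnion K H) {s : Set V}
    (hs : s ⊆ K.verts) : H.induce s = K.induce s := by
  ext x y
  · rfl
  · simp only [Subgraph.induce_adj]
    exact and_congr_right fun hx => and_congr_right fun _ => hKH.adj_iff (hs hx)

theorem isEdgeComp_map_iff (hKH : IsComponentUnion K H)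
    (k : K.coe.ConnectedComponent) :
    IsEdgeComp H (k.map (inclusion hKH.1)) ↔ IsEdgeComp K k := by
  rw [isEdgeComp_iff, isEdgeComp_iff, hKH.image_supp_map]
  refine exists₂_congr fun x y => and_congr_left fun hk => hKH.adj_iff ?_
  obtain ⟨z, -, rfl⟩ : x ∈ Subtype.val '' k.supp := hk ▸ Set.mem_insert x {y}
  exact z.2

theorem isCycleComp_map_iff (hKH : IsComponentUnion K H)
    (k : K.coe.ConnectedComponent) :
    IsCycleComp H (k.map (inclusion hKH.1)) ↔ IsCycleComp K k := by
  rw [isCycleComp_iff, isCycleComp_iff, hKH.image_supp_map,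
    hKH.induce_eq (Subtype.coe_image_subset _ _)]

theorem deleteVerts_sup (hKH : IsComponentUnion K H) :
    H.deleteVerts K.verts ⊔ K = H := by
  ext x y
  · simpa using fun hx => hKH.1.1 hx
  · simp only [Subgraph.sup_adj, deleteVerts_adj]
    constructor
    · rintro (⟨-, -, -, -, h⟩ | h)
      · exact h
      · exact hKH.1.2 h
    · intro h
      by_cases hx : x ∈ K.verts
      · exact Or.inr (hKH.2 x y h hx)
      by_cases hy : y ∈ K.verts
      · exact Or.inr (hKH.2 y x h.symm hy).symm
      · exact Or.inl ⟨h.fst_mem, hx, h.snd_mem, hy, h⟩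

end IsComponentUnion

section DisjointSup

variable {A B : G.Subgraph}

theorem isComponentUnion_sup_left (hd : Disjoint A.verts B.verts) :
    IsComponentUnion A (A ⊔ B) :=
  ⟨le_sup_left, fun _ _ hxy hx =>
    (Subgraph.sup_adj.1 hxy).resolve_right fun h => Set.disjoint_left.1 hd hx h.fst_mem⟩

theorem isComponentUnion_sup_right (hd : Disjoint A.verts B.verts) :
    IsComponentUnion B (A ⊔ B) :=
  sup_comm B A ▸ isComponentUnion_sup_left hd.symm

theorem exists_map_inclusion_eq_of_sup (m : (A ⊔ B).coe.ConnectedComponent) :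
    (∃ k : A.coe.ConnectedComponent, k.map (inclusion le_sup_left) = m) ∨
      ∃ l : B.coe.ConnectedComponent, l.map (inclusion le_sup_right) = m := by
  induction m using ConnectedComponent.ind with | h x => ?_
  rcases x.2 with hx | hx
  · exact Or.inl ⟨A.coe.connectedComponentMk ⟨x, hx⟩, rfl⟩
  · exact Or.inr ⟨B.coe.connectedComponentMk ⟨x, hx⟩, rfl⟩

theorem isSachs_sup (hd : Disjoint A.verts B.verts) :
    IsSachs (A ⊔ B) ↔ IsSachs A ∧ IsSachs B := by
  have hA := isComponentUnion_sup_left hd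
  have hB := isComponentUnion_sup_right hd
  refine ⟨fun h => ⟨fun k => ?_, fun l => ?_⟩, fun ⟨hSA, hSB⟩ m => ?_⟩
  · rw [← hA.isEdgeComp_map_iff, ← hA.isCycleComp_map_iff]
    exact h _
  · rw [← hB.isEdgeComp_map_iff, ← hB.isCycleComp_map_iff]
    exact h _
  · rcases exists_map_inclusion_eq_of_sup m with ⟨k, rfl⟩ | ⟨l, rfl⟩
    · rw [hA.isEdgeComp_map_iff, hA.isCycleComp_map_iff]
      exact hSA k
    · rw [hB.isEdgeComp_map_iff, hB.isCycleComp_map_iff]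
      exact hSB l

theorem tCount_sup_of_forall_ne (hd : Disjoint A.verts B.verts)
    (hB : ∀ l : B.coe.ConnectedComponent, IsCycleComp B l → l.supp.ncard % 4 ≠ 2) :
    tCount (A ⊔ B) = tCount A := by
  have hAU := isComponentUnion_sup_left hd
  have hBU := isComponentUnion_sup_right hd
  have himage : {m | IsCycleComp (A ⊔ B) m ∧ m.supp.ncard % 4 = 2} =
      ConnectedComponent.map (inclusion hAU.1) ''
        {k | IsCycleComp A k ∧ k.supp.ncard % 4 = 2} := by
    ext m
    constructor
    · rintro ⟨hcyc, hmod⟩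
      rcases exists_map_inclusion_eq_of_sup m with ⟨k, rfl⟩ | ⟨l, rfl⟩
      · exact ⟨k, ⟨(hAU.isCycleComp_map_iff k).1 hcyc, hAU.ncard_supp_map k ▸ hmod⟩, rfl⟩
      · exact absurd (hBU.ncard_supp_map l ▸ hmod) (hB l ((hBU.isCycleComp_map_iff l).1 hcyc))
    · rintro ⟨k, ⟨hcyc, hmod⟩, rfl⟩
      exact ⟨(hAU.isCycleComp_map_iff k).2 hcyc, (hAU.ncard_supp_map k).symm ▸ hmod⟩
  rw [tCount, tCount, himage, Set.ncard_image_of_injective _ hAU.map_injective]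

end DisjointSup

theorem cycCount_eq_tCount_of_forall {W : G.Subgraph}
    (hW : ∀ k : W.coe.ConnectedComponent, IsCycleComp W k → k.supp.ncard % 4 = 2) :
    cycCount W = tCount W := by
  rw [cycCount, tCount]
  congr
  ext k
  exact ⟨fun hk => ⟨hk, hW k hk⟩, And.left⟩

section CycleSubgraph

variable {v : V} {c : G.Walk v v}

theorem image_supp_toSubgraph (l : c.toSubgraph.coe.ConnectedComponent) :
    Subtype.val '' l.supp = c.toSubgraph.verts := by
  refine (Subtype.coe_image_subset _ _).antisymm fun x hx => ⟨⟨x, hx⟩, ?_, rfl⟩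
  induction l using ConnectedComponent.ind with | h a => ?_
  exact ConnectedComponent.sound (c.toSubgraph_connected.preconnected _ _)

theorem ncard_supp_toSubgraph (hc : c.IsCycle) (l : c.toSubgraph.coe.ConnectedComponent) :
    l.supp.ncard = c.length := by
  rw [← Set.ncard_image_of_injective _ Subtype.val_injective, image_supp_toSubgraph,
    Walk.verts_toSubgraph, hc.ncard_support]

theorem isSachs_toSubgraph (hc : c.IsCycle) : IsSachs c.toSubgraph := fun l =>
  Or.inr <| (isCycleComp_iff l).2 ⟨v, c, hc, by rw [image_supp_toSubgraph, induce_self_verts]⟩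

theorem ncard_supp_mod_four_of_disjoint (hbip : G.Colorable 2) (hic : Intercyclic4k G)
    (hc : c.IsCycle) (h4 : 4 ∣ c.length) {W : G.Subgraph}
    (hd : Disjoint W.verts c.toSubgraph.verts) {k : W.coe.ConnectedComponent}
    (hk : IsCycleComp W k) : k.supp.ncard % 4 = 2 := by
  obtain ⟨u, p, hp, hpW⟩ := (isCycleComp_iff k).1 hk
  have hverts : {x | x ∈ p.support} = Subtype.val '' k.supp := by
    rw [← Walk.verts_toSubgraph, hpW, induce_verts]
  have hlen : k.supp.ncard = p.length := by
    rw [← hp.ncard_support, hverts, Set.ncard_image_of_injective _ Subtype.val_injective]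
  have heven : Even p.length := two_colorable_iff_forall_loop_even.1 hbip u p
  have hnot4 : ¬ 4 ∣ p.length := fun hp4 => hic ⟨v, u, c, p, hc, hp, h4, hp4, fun x hxc hxp => by
    obtain ⟨y, -, rfl⟩ : x ∈ Subtype.val '' k.supp := hverts ▸ hxp
    exact Set.disjoint_left.1 hd y.2 ((c.mem_verts_toSubgraph).2 hxc)⟩
  rw [Nat.even_iff] at heven
  omega

end CycleSubgraph

theorem bijOn_deleteVerts [Finite V] {R : G.Subgraph} (hR : IsSachs R) {i : ℕ}
    (hi : R.verts.ncard ≤ i) :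
    Set.BijOn (fun H : G.Subgraph => H.deleteVerts R.verts)
      {H | IsSachs H ∧ H.verts.ncard = i ∧ IsComponentUnion R H}
      {W | IsSachs W ∧ W.verts.ncard = i - R.verts.ncard ∧ Disjoint W.verts R.verts} := by
  refine ⟨?_, ?_, ?_⟩
  · rintro H ⟨hS, rfl, hRH⟩
    have hd : Disjoint (H.deleteVerts R.verts).verts R.verts := disjoint_deleteVerts_verts
    refine ⟨((isSachs_sup hd).1 (by rwa [hRH.deleteVerts_sup])).1, ?_, hd⟩
    rw [deleteVerts_verts, Set.ncard_sdiff hRH.1.1]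
  · intro H₁ h₁ H₂ h₂ heq
    rw [← h₁.2.2.deleteVerts_sup, ← h₂.2.2.deleteVerts_sup]
    exact congrArg (· ⊔ R) heq
  · rintro W ⟨hS, hcard, hd⟩
    refine ⟨W ⊔ R, ⟨(isSachs_sup hd).2 ⟨hS, hR⟩, ?_, isComponentUnion_sup_right hd⟩,
      sup_deleteVerts_of_disjoint hd⟩
    rw [verts_sup, Set.ncard_union_eq hd, hcard]
    omega

theorem cycCount_deleteVerts_eq_tCount {R H : G.Subgraph} (hRH : IsComponentUnion R H)
    (hR : ∀ l : R.coe.ConnectedComponent, IsCycleComp R l → l.supp.ncard % 4 ≠ 2)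
    (hW : ∀ k : (H.deleteVerts R.verts).coe.ConnectedComponent,
      IsCycleComp _ k → k.supp.ncard % 4 = 2) :
    cycCount (H.deleteVerts R.verts) = tCount H := by
  conv_rhs => rw [← hRH.deleteVerts_sup]
  rw [tCount_sup_of_forall_ne disjoint_deleteVerts_verts hR, cycCount_eq_tCount_of_forall hW]

end SachsSubgraphs

theorem stmt_7_general {V : Type*} [Fintype V] (G : SimpleGraph V) (hbip : G.Colorable 2)
    (hic : Intercyclic4k G) (v : V) (c : G.Walk v v) (hc : c.IsCycle) (h4 : 4 ∣ c.length)
    (i : ℕ) (hge : (c.toSubgraph.verts).ncard ≤ i) :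
    Set.BijOn (fun H : G.Subgraph => H.deleteVerts c.toSubgraph.verts)
        {H : G.Subgraph | IsSachs H ∧ H.verts.ncard = i ∧ IsComponentUnion c.toSubgraph H}
        {W : G.Subgraph | IsSachs W ∧ W.verts.ncard = i - c.toSubgraph.verts.ncard ∧
          Disjoint W.verts c.toSubgraph.verts}
    ∧ ∀ H : G.Subgraph, IsSachs H → H.verts.ncard = i → IsComponentUnion c.toSubgraph H →
        cycCount (H.deleteVerts c.toSubgraph.verts) = tCount H :=
  ⟨bijOn_deleteVerts (isSachs_toSubgraph hc) hge, fun _ _ _ hRH =>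
    cycCount_deleteVerts_eq_tCount hRH (fun l _ => by rw [ncard_supp_toSubgraph hc l]; omega)
      (fun _ hk => ncard_supp_mod_four_of_disjoint hbip hic hc h4
        Subgraph.disjoint_deleteVerts_verts hk)⟩

/-- Let `G` be a `4k`-intercyclic bipartite graph, `R = c.toSubgraph` a cycle
of `G` of length divisible by 4, and `i` an even integer with `i ≥ |V(R)|`. Then deleting the
vertices of `R` is a bijection from the Sachs subgraphs of `G` on `i` vertices containing `R`
as a union of components onto the Sachs subgraphs on `i - |V(R)|` vertices avoiding `V(R)`
(i.e. the Sachs subgraphs of `G∖R`); moreover it sends the number of cycle components of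
length ≡ 2 mod 4 to the total number of cycle components. -/
theorem stmt_7 {V : Type*} [Fintype V] (G : SimpleGraph V) (hbip : G.Colorable 2)
    (hic : Intercyclic4k G) (v : V) (c : G.Walk v v) (hc : c.IsCycle) (h4 : 4 ∣ c.length)
    (i : ℕ) (hi : Even i) (hge : (c.toSubgraph.verts).ncard ≤ i) :
    Set.BijOn (fun H : G.Subgraph => H.deleteVerts c.toSubgraph.verts)
        {H : G.Subgraph | IsSachs H ∧ H.verts.ncard = i ∧ IsComponentUnion c.toSubgraph H}
        {W : G.Subgraph | IsSachs W ∧ W.verts.ncard = i - c.toSubgraph.verts.ncard ∧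
          Disjoint W.verts c.toSubgraph.verts}
    ∧ ∀ H : G.Subgraph, IsSachs H → H.verts.ncard = i → IsComponentUnion c.toSubgraph H →
        cycCount (H.deleteVerts c.toSubgraph.verts) = tCount H :=
  stmt_7_general G hbip hic v c hc h4 i hge

end
end

section
/- Let G be a finite simple bipartite graph on n vertices. Then G is C_{4k}-free (contains no cycle whose length is divisible by 4) if and only if π(G,x) = φ_p(G,x), where π(G,x) = per(xI − A(G)) is the permanental polynomial and φ_p(G,x) = Σ_{i even} (−1)^{i/2} a_i x^{n−i} is the modified characteristic polynomial built from the coefficients a_i of the characteristic polynomial φ(G,x) = det(xI − A(G)). -/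
open Polynomial SimpleGraph
open scoped Classical

noncomputable section

/-!
Expand `det (xI - A)` and `per (xI - A)` over permutations `σ`: only permutations moving each
vertex they do not fix to a neighbour contribute, each with `(-1)^|supp σ| x^(n - |supp σ|)`,
times `sign σ` in the determinant. In a bipartite graph `|supp σ|` is even, so
`π(G,x) = ∑ x^(n - |supp σ|)` and `φ_p(G,x) = ∑ w(σ) x^(n - |supp σ|)` with the weight
`w(σ) = (-1)^(|supp σ|/2) sign σ = ±1`. An even cycle of `σ` of length `m` contributes `-1` to
`sign σ` and `(-1)^(m/2)` to the other factor; these agree iff `m ≡ 2 (mod 4)`, and a cycle of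
`σ` of length `m ≥ 3` is an `m`-cycle of `G`. So if `G` is `C_{4k}`-free all weights are `1`.
Conversely a `4k`-cycle of `G` is a permutation of weight `-1`, which makes the coefficient of
`x^(n - 4k)` in `φ_p` strictly smaller than in `π`.
-/

open Equiv Finset

theorem Multiset.sum_eq_of_forall_mod_four_eq_two {s : Multiset ℕ} (h : ∀ m ∈ s, m % 4 = 2) :
    s.sum = 4 * (s.map (· / 4)).sum + 2 * Multiset.card s := by
  induction s using Multiset.induction_on with
  | empty => simp
  | cons a s ih =>
    have ha := h a (Multiset.mem_cons_self a s)
    rw [Multiset.sum_cons, Multiset.map_cons, Multiset.sum_cons, Multiset.card_cons,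
      ih fun m hm => h m (Multiset.mem_cons_of_mem hm)]
    omega

theorem Equiv.Perm.sign_eq_neg_one_pow_card_support_div_two {α : Type*} [Fintype α]
    [DecidableEq α] {σ : Perm α} (h : ∀ m ∈ σ.cycleType, m % 4 = 2) :
    sign σ = (-1) ^ (#σ.support / 2) := by
  have hsum := Multiset.sum_eq_of_forall_mod_four_eq_two h
  rw [sign_of_cycleType, ← sum_cycleType, Int.units_pow_eq_pow_mod_two,
    Int.units_pow_eq_pow_mod_two _ (_ / 2)]
  congr 1
  omega

theorem Equiv.Perm.IsCycle.neg_one_pow_card_support_div_two_mul_sign {α : Type*} [Fintype α]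
    [DecidableEq α] {σ : Perm α} (hσ : σ.IsCycle) (h4 : 4 ∣ #σ.support) :
    (-1) ^ (#σ.support / 2) * Perm.sign σ = -1 := by
  obtain ⟨k, hk⟩ := h4
  rw [hσ.sign, hk, Int.units_pow_eq_pow_mod_two, Int.units_pow_eq_pow_mod_two _ (4 * k)]
  simp [show 4 * k / 2 % 2 = 0 by omega, show 4 * k % 2 = 0 by omega]

namespace SimpleGraph

variable {V : Type*}

def IsAdjPerm (G : SimpleGraph V) (σ : Perm V) : Prop := ∀ v, σ v ≠ v → G.Adj v (σ v)

section

variable {G : SimpleGraph V}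

theorem IsAdjPerm.of_mem_cycleFactorsFinset [Fintype V] {σ c : Perm V} (h : G.IsAdjPerm σ)
    (hc : c ∈ σ.cycleFactorsFinset) : G.IsAdjPerm c := by
  intro v hv
  have hcv := (Perm.mem_cycleFactorsFinset_iff.1 hc).2 v (Perm.mem_support.2 hv)
  rw [hcv] at hv ⊢
  exact h v hv

theorem IsAdjPerm.even_card_support [Fintype V] {σ : Perm V} (hbip : G.Colorable 2)
    (h : G.IsAdjPerm σ) : Even #σ.support := by
  obtain ⟨f⟩ := hbip
  have hswap : ∀ v ∈ σ.support, σ v ∈ σ.support ∧ f (σ v) ≠ f v := fun v hv =>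
    ⟨Perm.apply_mem_support.2 hv, (f.valid (h v (Perm.mem_support.1 hv))).symm⟩
  have hcard : #(σ.support.filter (f · = 0)) = #(σ.support.filter (f · ≠ 0)) := by
    apply le_antisymm <;> refine card_le_card_of_injOn σ (fun v hv => ?_) σ.injective.injOn
    all_goals
      obtain ⟨hv, hfv⟩ := mem_filter.1 hv
      obtain ⟨hσv, hne⟩ := hswap v hv
      refine mem_filter.2 ⟨hσv, ?_⟩
      omega
  rw [← card_filter_add_card_filter_not (f · = 0), hcard]
  exact Even.add_self _

theorem IsAdjPerm.cycleGraph_isContained [Fintype V] {c : Perm V} (h : G.IsAdjPerm c)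
    (hc : c.IsCycle) : cycleGraph #c.support ⊑ G := by
  obtain ⟨a, ha⟩ := hc.nonempty_support
  have hcyc : c.cycleOf a = c := hc.cycleOf_eq (Perm.mem_support.1 ha)
  obtain ⟨n, hn⟩ : ∃ n, #c.support = n + 2 :=
    ⟨_, (Nat.sub_add_cancel hc.two_le_card_support).symm⟩
  have hlen : (c.toList a).length = n + 2 := by rw [Perm.length_toList, hcyc, hn]
  have hstep (v : Fin (n + 2)) :
      G.Adj ((c ^ (v : ℕ)) a) ((c ^ ((v + 1 : Fin (n + 2)) : ℕ)) a) := by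
    have hmod := Perm.pow_mod_card_support_cycleOf_self_apply c (v + 1) a
    rw [hcyc, hn] at hmod
    rw [Fin.val_add, Fin.val_one, hmod, pow_succ', Perm.mul_apply]
    exact h _ (Perm.mem_support.1 (Perm.pow_apply_mem_support.2 ha))
  rw [hn]
  refine ⟨⟨⟨fun k => (c ^ (k : ℕ)) a, fun {u v} huv => ?_⟩, fun u v huv => ?_⟩⟩
  · rcases cycleGraph_adj.1 huv with huv | huv
    · rw [eq_add_of_sub_eq' huv]
      exact (hstep v).symm
    · rw [eq_add_of_sub_eq' huv]
      exact hstep u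
  · change (c ^ (u : ℕ)) a = (c ^ (v : ℕ)) a at huv
    rw [← Perm.getElem_toList c a u (by omega), ← Perm.getElem_toList c a v (by omega)] at huv
    exact Fin.ext ((Perm.nodup_toList c a).getElem_inj_iff.1 huv)

theorem exists_isAdjPerm_of_cycleGraph_isContained [Fintype V] {m : ℕ} (hm : 2 ≤ m)
    (h : cycleGraph m ⊑ G) : ∃ σ : Perm V, σ.IsCycle ∧ G.IsAdjPerm σ ∧ #σ.support = m := by
  obtain ⟨f⟩ := h
  obtain ⟨n, rfl⟩ : ∃ n, m = n + 2 := ⟨m - 2, by omega⟩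
  let e := Equiv.ofInjective f f.injective
  refine ⟨(finRotate (n + 2)).extendDomain e, isCycle_finRotate.extendDomain e, ?_, ?_⟩
  · intro v hv
    by_cases hvf : v ∈ Set.range f
    · obtain ⟨k, rfl⟩ := hvf
      have hrot : (finRotate (n + 2)).extendDomain e (f k) = f (k + 1) := by
        simpa [e, finRotate_apply] using
          Perm.extendDomain_apply_image (finRotate (n + 2)) e k
      rw [hrot]
      exact f.toHom.map_adj (cycleGraph_adj.2 (Or.inr (by simp)))
    · exact absurd (Perm.extendDomain_apply_not_subtype _ e hvf) hv
  · rw [Perm.card_support_extend_domain, support_finRotate, card_univ, Fintype.card_fin]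

theorem IsAdjPerm.card_support_mod_four [Fintype V] {c : Perm V} (hbip : G.Colorable 2)
    (hfree : C4kFree G) (h : G.IsAdjPerm c) (hc : c.IsCycle) : #c.support % 4 = 2 := by
  have h2 := hc.two_le_card_support
  obtain ⟨k, hk⟩ := h.even_card_support hbip
  suffices ¬ 4 ∣ #c.support by omega
  intro h4
  obtain ⟨v, w, hw, hlen⟩ :=
    (cycleGraph_isContained_iff (by omega)).1 (h.cycleGraph_isContained hc)
  exact hfree ⟨v, w, hw, hlen ▸ h4⟩

theorem IsAdjPerm.sign_eq [Fintype V] {σ : Perm V} (hbip : G.Colorable 2) (hfree : C4kFree G)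
    (h : G.IsAdjPerm σ) : Perm.sign σ = (-1) ^ (#σ.support / 2) := by
  refine Perm.sign_eq_neg_one_pow_card_support_div_two fun m hm => ?_
  obtain ⟨c, hc, rfl⟩ : ∃ c ∈ σ.cycleFactorsFinset, #c.support = m := by
    simpa [Perm.cycleType_def] using hm
  exact (h.of_mem_cycleFactorsFinset hc).card_support_mod_four hbip hfree
    (Perm.mem_cycleFactorsFinset_iff.1 hc).1

end

section

variable (R : Type*) [CommRing R] [Fintype V] (G : SimpleGraph V)

theorem prod_charmatrix_adjMat (σ : Perm V) :
    ∏ v, (adjMat R G).charmatrix (σ v) v =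
      if G.IsAdjPerm σ then (-1) ^ #σ.support * X ^ (Fintype.card V - #σ.support) else 0 := by
  rw [← prod_mul_prod_compl σ.support]
  have hfixed : ∏ v ∈ σ.supportᶜ, (adjMat R G).charmatrix (σ v) v =
      X ^ (Fintype.card V - #σ.support) := by
    rw [← card_compl, ← prod_const]
    refine prod_congr rfl fun v hv => ?_
    rw [Perm.notMem_support.1 (mem_compl.1 hv), Matrix.charmatrix_apply_eq]
    simp [adjMat]
  have hmoved : ∏ v ∈ σ.support, (adjMat R G).charmatrix (σ v) v =
      (-1) ^ #σ.support * ∏ v ∈ σ.support, C (adjMat R G (σ v) v) := by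
    rw [← prod_neg]
    exact prod_congr rfl fun v hv => Matrix.charmatrix_apply_ne _ _ _ (Perm.mem_support.1 hv)
  have hadj : (∀ v ∈ σ.support, G.Adj (σ v) v) ↔ G.IsAdjPerm σ :=
    forall_congr' fun v => by rw [Perm.mem_support, adj_comm]
  rw [hfixed, hmoved]
  simp only [adjMat, apply_ite C, map_one, map_zero, prod_boole, hadj]
  split_ifs <;> simp

def adjPermPoly (f : Perm V → ℤ) : R[X] :=
  ∑ σ with G.IsAdjPerm σ, C (f σ : R) * X ^ (Fintype.card V - #σ.support)

theorem coeff_adjPermPoly (f : Perm V → ℤ) {i : ℕ} (hi : i ≤ Fintype.card V) :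
    (adjPermPoly R G f).coeff (Fintype.card V - i) =
      ((∑ σ with G.IsAdjPerm σ ∧ #σ.support = i, f σ : ℤ) : R) := by
  rw [adjPermPoly, finsetSum_coeff, ← filter_filter,
    sum_filter fun σ : Perm V => #σ.support = i, Int.cast_sum]
  refine sum_congr rfl fun σ _ => ?_
  have hσ : #σ.support ≤ Fintype.card V := card_le_univ _
  rw [coeff_C_mul_X_pow]
  by_cases h : #σ.support = i
  · simp [h]
  · rw [if_neg (by omega), if_neg h, Int.cast_zero]

theorem permPolyG_eq_adjPermPoly (hbip : G.Colorable 2) : permPolyG R G = adjPermPoly R G 1 := by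
  rw [permPolyG, Matrix.permanent, adjPermPoly, sum_filter]
  refine sum_congr rfl fun σ _ => ?_
  rw [prod_charmatrix_adjMat]
  split_ifs with h
  · simp [(h.even_card_support hbip).neg_one_pow]
  · rfl

theorem charPolyG_eq_adjPermPoly :
    charPolyG R G = adjPermPoly R G fun σ => Perm.sign σ * (-1) ^ #σ.support := by
  rw [charPolyG, Matrix.charpoly, Matrix.det_apply', adjPermPoly, sum_filter]
  refine sum_congr rfl fun σ _ => ?_
  rw [prod_charmatrix_adjMat]
  split_ifs <;> simp [mul_assoc]

theorem phiP_eq_adjPermPoly (hbip : G.Colorable 2) :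
    phiP G = adjPermPoly ℝ G fun σ => ((-1) ^ (#σ.support / 2) * Perm.sign σ : ℤˣ) := by
  have hterm : ∀ i ∈ range (Fintype.card V + 1),
      (if Even i then
        C ((-1 : ℝ) ^ (i / 2) * (charPolyG ℝ G).coeff (Fintype.card V - i)) *
          X ^ (Fintype.card V - i)
      else 0) =
      ∑ σ ∈ {σ | G.IsAdjPerm σ} with #σ.support = i,
        C ((((-1) ^ (#σ.support / 2) * Perm.sign σ : ℤˣ) : ℤ) : ℝ) *
          X ^ (Fintype.card V - #σ.support) := by
    intro i hi
    rw [charPolyG_eq_adjPermPoly, coeff_adjPermPoly _ _ _ (Nat.lt_succ_iff.1 (mem_range.1 hi)),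
      filter_filter]
    split_ifs with he
    · rw [Int.cast_sum, mul_sum, map_sum, sum_mul]
      refine sum_congr rfl fun σ hσ => ?_
      obtain ⟨-, rfl⟩ := (mem_filter.1 hσ).2
      simp [he.neg_one_pow]
    · refine (sum_eq_zero fun σ hσ => ?_).symm
      obtain ⟨hadj, rfl⟩ := (mem_filter.1 hσ).2
      exact absurd (hadj.even_card_support hbip) he
  rw [phiP, sum_congr rfl hterm,
    sum_fiberwise_of_maps_to fun σ _ => mem_range.2 (Nat.lt_succ_of_le (card_le_univ _))]
  rfl

end

end SimpleGraph

/-- Borowiecki's corollary. A bipartite graph `G` is `C_{4k}`-free iff its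
permanental polynomial equals its modified characteristic polynomial. -/
theorem stmt_9 {V : Type*} [Fintype V] (G : SimpleGraph V) (hbip : G.Colorable 2) :
    C4kFree G ↔ permPolyG ℝ G = phiP G := by
  rw [permPolyG_eq_adjPermPoly ℝ G hbip, phiP_eq_adjPermPoly G hbip]
  constructor
  · intro hfree
    refine sum_congr rfl fun σ hσ => ?_
    simp only [Pi.one_apply, (mem_filter.1 hσ).2.sign_eq hbip hfree, Int.units_mul_self,
      Units.val_one]
  · rintro heq ⟨v, w, hw, h4⟩
    obtain ⟨σ, hσ, hadj, hcard⟩ := exists_isAdjPerm_of_cycleGraph_isContained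
      (Nat.le_of_lt hw.three_le_length)
      ((cycleGraph_isContained_iff hw.three_le_length).2 ⟨v, w, hw, rfl⟩)
    have hcoeff := congrArg (coeff · (Fintype.card V - w.length)) heq
    simp only [coeff_adjPermPoly ℝ G _ (hcard ▸ card_le_univ _), Int.cast_inj] at hcoeff
    refine (sum_lt_sum (fun τ _ => ?_) ⟨σ, mem_filter.2 ⟨mem_univ σ, hadj, hcard⟩, ?_⟩).ne'
      hcoeff
    · rcases Int.units_eq_one_or ((-1) ^ (#τ.support / 2) * Perm.sign τ) with h | h <;> simp [h]
    · rw [Perm.IsCycle.neg_one_pow_card_support_div_two_mul_sign hσ (hcard ▸ h4)]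
      simp

end
end

section
/- Let G_1 and G_2 be finite simple bipartite 4k-intercyclic graphs (each containing no two vertex-disjoint cycles of length divisible by 4) on the same number n of vertices, and suppose f(G_1,x) = f(G_2,x), where f(G,x) = π(G,x) − φ_p(G,x) with π(G,x) = per(xI − A(G)) and φ_p(G,x) = Σ_{i even} (−1)^{i/2} a_i x^{n−i}. Then G_1 and G_2 are cospectral (det(xI − A(G_1)) = det(xI − A(G_2))) if and only if they are per-cospectral (per(xI − A(G_1)) = per(xI − A(G_2))). -/
open Polynomial SimpleGraph
open scoped Classical

noncomputable section

section AuxCharpoly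
open Polynomial
variable {W : Type*} [Fintype W] [DecidableEq W]

lemma aux_coeff_comp_neg_X (p : ℝ[X]) (k : ℕ) :
    (p.comp (-X)).coeff k = (-1) ^ k * p.coeff k := by
  rw [Polynomial.comp, Polynomial.eval₂_eq_sum_range, Polynomial.finset_sum_coeff]
  have : ∀ i, (C (p.coeff i) * (-X : ℝ[X]) ^ i).coeff k
      = if i = k then (-1) ^ k * p.coeff k else 0 := by
    intro i
    rw [neg_pow, show ((-1 : ℝ[X]) ^ i) = C ((-1 : ℝ) ^ i) by simp, ← mul_assoc, ← C_mul,
      coeff_C_mul, coeff_X_pow]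
    by_cases h : i = k
    · subst h; simp [mul_comm]
    · simp [h, Ne.symm h]
  simp only [this]
  rw [Finset.sum_ite_eq' (Finset.range (p.natDegree + 1)) k]
  by_cases hk : k ∈ Finset.range (p.natDegree + 1)
  · simp [hk]
  · rw [Finset.mem_range, not_lt] at hk
    rw [p.coeff_eq_zero_of_natDegree_lt (by omega), mul_zero, ite_self]

lemma aux_eval_det (M : Matrix W W ℝ[X]) (r : ℝ) : eval r M.det = (M.map (eval r)).det := by
  rw [← coe_evalRingHom, RingHom.map_det]; rfl

lemma aux_charpoly_neg (A : Matrix W W ℝ) :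
    (-A).charpoly = C ((-1 : ℝ) ^ Fintype.card W) * A.charpoly.comp (-X) := by
  apply Polynomial.funext
  intro x
  rw [Matrix.charpoly, Matrix.charpoly, aux_eval_det, eval_mul, eval_C, eval_comp,
    eval_neg, eval_X, aux_eval_det]
  have : (Matrix.charmatrix (-A)).map (eval x) = -((Matrix.charmatrix A).map (eval (-x))) := by
    ext u v
    by_cases h : u = v
    · subst h
      simp [Matrix.charmatrix_apply_eq, add_comm]
    · simp [Matrix.charmatrix_apply_ne _ _ _ h]
  rw [this, Matrix.det_neg]

lemma aux_charpoly_neg_eq (A : Matrix W W ℝ) (c : W → Fin 2)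
    (h : ∀ u v, A u v ≠ 0 → c u ≠ c v) :
    (-A).charpoly = A.charpoly := by
  set D : Matrix W W ℝ[X] := Matrix.diagonal fun v => C ((-1 : ℝ) ^ (c v : ℕ)) with hD
  have hDD : D * D = 1 := by
    rw [hD, Matrix.diagonal_mul_diagonal]
    convert Matrix.diagonal_one
    rw [← C_mul, ← pow_add, ← two_mul, pow_mul]
    norm_num
  have h2 : ∀ a b : Fin 2, a ≠ b →
      ((a:ℕ) = 0 ∧ (b:ℕ) = 1) ∨ ((a:ℕ) = 1 ∧ (b:ℕ) = 0) := by decide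
  have hkey : Matrix.charmatrix (-A) = D * Matrix.charmatrix A * D := by
    apply Matrix.ext
    intro u v
    rw [hD, Matrix.mul_diagonal, Matrix.diagonal_mul]
    by_cases huv : u = v
    · subst huv
      have hA : A u u = 0 := by
        by_contra hne
        exact (h u u hne) rfl
      rw [Matrix.charmatrix_apply_eq, Matrix.charmatrix_apply_eq, Matrix.neg_apply, hA]
      rw [mul_comm, ← mul_assoc, ← C_mul, ← pow_add, ← two_mul, pow_mul]
      norm_num
    · rw [Matrix.charmatrix_apply_ne _ _ _ huv, Matrix.charmatrix_apply_ne _ _ _ huv,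
        Matrix.neg_apply, map_neg, neg_neg]
      by_cases hA : A u v = 0
      · simp [hA]
      · have hc := h u v hA
        have hs : (-1 : ℝ) ^ (c u : ℕ) * (-1 : ℝ) ^ (c v : ℕ) = -1 := by
          rcases h2 _ _ hc with ⟨ha, hb⟩ | ⟨ha, hb⟩ <;> rw [ha, hb] <;> norm_num
        rw [mul_comm (C _) (-C (A u v)), mul_assoc, ← C_mul, hs]
        simp
  rw [Matrix.charpoly, Matrix.charpoly, hkey, Matrix.det_mul, Matrix.det_mul]
  have hdet : D.det * D.det = 1 := by rw [← Matrix.det_mul, hDD, Matrix.det_one]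
  calc D.det * (Matrix.charmatrix A).det * D.det
      = (Matrix.charmatrix A).det * (D.det * D.det) := by ring
    _ = (Matrix.charmatrix A).det := by rw [hdet, mul_one]

end AuxCharpoly

section AuxGraph
variable {W : Type*} [Fintype W]

lemma aux_charPolyG_coeff_eq_zero_of_odd (G : SimpleGraph W) (hbip : G.Colorable 2) (k : ℕ)
    (hk : Odd (Fintype.card W + k)) : (charPolyG ℝ G).coeff k = 0 := by
  obtain ⟨col⟩ := hbip
  have h : ∀ u v, adjMat ℝ G u v ≠ 0 → col u ≠ col v := by
    intro u v hne
    apply col.valid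
    by_contra hadj
    exact hne (by simp [adjMat, hadj])
  have e := (aux_charpoly_neg_eq (adjMat ℝ G) col h).symm.trans
      (aux_charpoly_neg (adjMat ℝ G))
  have e2 := congrArg (fun p => p.coeff k) e
  simp only [coeff_C_mul, aux_coeff_comp_neg_X, ← mul_assoc, ← pow_add] at e2
  rw [Odd.neg_one_pow hk] at e2
  rw [charPolyG]
  linarith [e2]

lemma aux_charPolyG_coeff_eq_zero_of_lt (G : SimpleGraph W) (k : ℕ)
    (hk : Fintype.card W < k) : (charPolyG ℝ G).coeff k = 0 := by
  apply Polynomial.coeff_eq_zero_of_natDegree_lt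
  rwa [charPolyG, Matrix.charpoly_natDegree_eq_dim]

lemma aux_phiP_coeff (G : SimpleGraph W) (k : ℕ) (hk : k ≤ Fintype.card W)
    (he : Even (Fintype.card W - k)) :
    (phiP G).coeff k
      = (-1 : ℝ) ^ ((Fintype.card W - k) / 2) * (charPolyG ℝ G).coeff k := by
  set n := Fintype.card W
  rw [phiP, Polynomial.finset_sum_coeff]
  rw [Finset.sum_eq_single (n - k)]
  · rw [if_pos he, coeff_C_mul, coeff_X_pow, if_pos (by omega : k = n - (n - k))]
    rw [show n - (n - k) = k by omega]
    ring
  · intro i hi hne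
    rw [Finset.mem_range] at hi
    by_cases hei : Even i
    · rw [if_pos hei, coeff_C_mul, coeff_X_pow, if_neg (by omega), mul_zero]
    · rw [if_neg hei, coeff_zero]
  · intro hmem
    exact absurd (Finset.mem_range.mpr (by omega)) hmem

end AuxGraph

/-- Two `4k`-intercyclic bipartite graphs on the same number of vertices and
with the same `f(G,x) = π(G,x) - φ_p(G,x)` are cospectral iff they are per-cospectral. -/
theorem stmt_11 {V₁ V₂ : Type*} [Fintype V₁] [Fintype V₂]
    (G₁ : SimpleGraph V₁) (G₂ : SimpleGraph V₂)
    (hbip₁ : G₁.Colorable 2) (hbip₂ : G₂.Colorable 2)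
    (hic₁ : Intercyclic4k G₁) (hic₂ : Intercyclic4k G₂)
    (hn : Fintype.card V₁ = Fintype.card V₂)
    (hf : permPolyG ℝ G₁ - phiP G₁ = permPolyG ℝ G₂ - phiP G₂) :
    charPolyG ℝ G₁ = charPolyG ℝ G₂ ↔ permPolyG ℝ G₁ = permPolyG ℝ G₂ := by
  have h1 : charPolyG ℝ G₁ = charPolyG ℝ G₂ → phiP G₁ = phiP G₂ := by
    intro h
    unfold phiP
    rw [hn, h]
  have h2 : phiP G₁ = phiP G₂ → charPolyG ℝ G₁ = charPolyG ℝ G₂ := by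
    intro h
    ext k
    by_cases hk : Fintype.card V₁ < k
    · rw [aux_charPolyG_coeff_eq_zero_of_lt G₁ k hk,
        aux_charPolyG_coeff_eq_zero_of_lt G₂ k (hn ▸ hk)]
    push_neg at hk
    by_cases he : Even (Fintype.card V₁ - k)
    · have e1 := aux_phiP_coeff G₁ k hk he
      have e2 := aux_phiP_coeff G₂ k (by omega) (by rw [← hn]; exact he)
      rw [h] at e1
      rw [← hn] at e2
      have := e1.symm.trans e2
      exact mul_left_cancel₀ (pow_ne_zero _ (by norm_num)) this
    · have hodd : Odd (Fintype.card V₁ + k) := by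
        rw [Nat.even_sub hk] at he
        rw [Nat.odd_iff]
        rw [Nat.even_iff, Nat.even_iff] at he
        omega
      rw [aux_charPolyG_coeff_eq_zero_of_odd G₁ hbip₁ k hodd,
        aux_charPolyG_coeff_eq_zero_of_odd G₂ hbip₂ k (hn ▸ hodd)]
  constructor
  · intro hch
    have hphi := h1 hch
    rw [hphi] at hf
    exact sub_left_inj.mp hf
  · intro hperm
    rw [hperm] at hf
    exact h2 (sub_right_inj.mp hf)


end
end
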